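/- If the blocks of a multiplicative Schwarz method cover all unknowns (every index 1,…,n belongs to at least one block B_j) and A is symmetric positive definite, then the error propagation matrix E = Π_{j=1}^{NB} (I − V_jᵀ (V_j A V_jᵀ)^{-1} V_j A) satisfies ‖E‖_A < 1, i.e., the method is convergent. -/

import Mathlib

open Matrix

/-- One factor of the multiplicative Schwarz iteration for the block selected
by `V`: `I − Vᵀ (V A Vᵀ)⁻¹ V A`. -/
noncomputable def schwarzFactor {n m : ℕ} (A : Matrix (Fin n) (Fin n) ℝ)
    (V : Matrix (Fin m) (Fin n) ℝ) : Matrix (Fin n) (Fin n) ℝ :=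
  1 - Vᵀ * (V * A * Vᵀ)⁻¹ * (V * A)

section Aux

variable {n m : ℕ}

/-- helper: (M *ᵥ x) ⬝ᵥ (N *ᵥ y) = x ⬝ᵥ (Mᵀ*N) *ᵥ y -/
lemma aux_dot (M : Matrix (Fin m) (Fin n) ℝ) (N : Matrix (Fin m) (Fin n) ℝ)
    (x y : Fin n → ℝ) :
    (M *ᵥ x) ⬝ᵥ (N *ᵥ y) = x ⬝ᵥ ((Mᵀ * N) *ᵥ y) := by
  rw [← mulVec_mulVec, dotProduct_mulVec x, vecMul_transpose]

lemma aux_PtAP (A : Matrix (Fin n) (Fin n) ℝ) (hAT : Aᵀ = A)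
    (V : Matrix (Fin m) (Fin n) ℝ) (hB : IsUnit (V * A * Vᵀ).det)
    (hBT : (V * A * Vᵀ)ᵀ = V * A * Vᵀ) :
    (schwarzFactor A V)ᵀ * A * (schwarzFactor A V)
      = A - (A * Vᵀ) * (V * A * Vᵀ)⁻¹ * (V * A) := by
  have hinv : (V * A * Vᵀ)⁻¹ * (V * A * Vᵀ) = 1 := nonsing_inv_mul _ hB
  have hTinv : ((V * A * Vᵀ)⁻¹)ᵀ = (V * A * Vᵀ)⁻¹ := by
    rw [transpose_nonsing_inv, hBT]
  have cancel : ∀ (C : Matrix (Fin m) (Fin n) ℝ),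
      V * (A * (Vᵀ * ((V * (A * Vᵀ))⁻¹ * C))) = C := by
    intro C
    have h := mul_nonsing_inv_cancel_left (V * A * Vᵀ) C hB
    simpa only [Matrix.mul_assoc] using h
  rw [schwarzFactor]
  simp only [transpose_sub, transpose_one, transpose_mul, transpose_transpose, hTinv, hAT]
  simp only [sub_mul, mul_sub, one_mul, mul_one, Matrix.mul_assoc, cancel]
  abel

/-- per-factor step: quadratic form decreases, with equality info. -/
lemma aux_step (A : Matrix (Fin n) (Fin n) ℝ) (hA : A.PosDef) (hAT : Aᵀ = A)
    (V : Matrix (Fin m) (Fin n) ℝ) (hB : (V * A * Vᵀ).PosDef) (x : Fin n → ℝ) :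
    ((schwarzFactor A V) *ᵥ x) ⬝ᵥ (A *ᵥ ((schwarzFactor A V) *ᵥ x)) ≤ x ⬝ᵥ (A *ᵥ x)
    ∧ (((schwarzFactor A V) *ᵥ x) ⬝ᵥ (A *ᵥ ((schwarzFactor A V) *ᵥ x)) = x ⬝ᵥ (A *ᵥ x)
        → (schwarzFactor A V) *ᵥ x = x ∧ (V * A) *ᵥ x = 0) := by
  have hBT : (V * A * Vᵀ)ᵀ = V * A * Vᵀ := by
    have := hB.isHermitian
    rwa [Matrix.IsHermitian, conjTranspose_eq_transpose_of_trivial] at this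
  have hBu : IsUnit (V * A * Vᵀ).det := hB.det_pos.ne'.isUnit
  have hQ : ((schwarzFactor A V) *ᵥ x) ⬝ᵥ (A *ᵥ ((schwarzFactor A V) *ᵥ x))
      = x ⬝ᵥ (A *ᵥ x)
        - ((V * A) *ᵥ x) ⬝ᵥ ((V * A * Vᵀ)⁻¹ *ᵥ ((V * A) *ᵥ x)) := by
    have h1 : ((schwarzFactor A V) *ᵥ x) ⬝ᵥ (A *ᵥ ((schwarzFactor A V) *ᵥ x))
        = x ⬝ᵥ (((schwarzFactor A V)ᵀ * A * (schwarzFactor A V)) *ᵥ x) := by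
      rw [mulVec_mulVec, aux_dot, Matrix.mul_assoc]
    rw [h1, aux_PtAP A hAT V hBu hBT, sub_mulVec, dotProduct_sub]
    congr 1
    have h3 : A * Vᵀ * (V * A * Vᵀ)⁻¹ * (V * A)
        = (V * A)ᵀ * ((V * A * Vᵀ)⁻¹ * (V * A)) := by
      rw [transpose_mul, hAT]; simp only [Matrix.mul_assoc]
    rw [h3, ← aux_dot]
    simp only [← mulVec_mulVec]
  have hrnn : 0 ≤ ((V * A) *ᵥ x) ⬝ᵥ ((V * A * Vᵀ)⁻¹ *ᵥ ((V * A) *ᵥ x)) := by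
    have := hB.inv.posSemidef.dotProduct_mulVec_nonneg ((V * A) *ᵥ x)
    simpa using this
  constructor
  · rw [hQ]; linarith
  · intro heq
    have hr0 : ((V * A) *ᵥ x) ⬝ᵥ ((V * A * Vᵀ)⁻¹ *ᵥ ((V * A) *ᵥ x)) = 0 := by
      rw [hQ] at heq; linarith
    have hw0 : (V * A) *ᵥ x = 0 := by
      by_contra hwne
      have := hB.inv.dotProduct_mulVec_pos hwne
      simp only [star_trivial] at this
      rw [hr0] at this; exact lt_irrefl 0 this
    refine ⟨?_, hw0⟩
    have hP : schwarzFactor A V *ᵥ x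
        = x - (Vᵀ * (V * A * Vᵀ)⁻¹) *ᵥ ((V * A) *ᵥ x) := by
      rw [schwarzFactor, sub_mulVec, one_mulVec, mulVec_mulVec]
    rw [hP, hw0, mulVec_zero, sub_zero]

/-- the block Gram matrix is positive definite. -/
lemma aux_gram (A : Matrix (Fin n) (Fin n) ℝ) (hA : A.PosDef)
    (f : Fin m → Fin n) (hf : Function.Injective f)
    (V : Matrix (Fin m) (Fin n) ℝ)
    (hV : V = Matrix.of fun a b => if f a = b then (1 : ℝ) else 0) :
    (V * A * Vᵀ).PosDef := by
  have hAT : Aᵀ = A := by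
    have := hA.isHermitian
    rwa [Matrix.IsHermitian, conjTranspose_eq_transpose_of_trivial] at this
  rw [posDef_iff_dotProduct_mulVec]
  constructor
  · show (V * A * Vᵀ)ᴴ = V * A * Vᵀ
    rw [conjTranspose_eq_transpose_of_trivial, transpose_mul, transpose_mul,
      transpose_transpose, hAT, Matrix.mul_assoc]
  · intro y hy
    simp only [star_trivial]
    have key : (Vᵀ *ᵥ y) ⬝ᵥ (A *ᵥ (Vᵀ *ᵥ y)) = y ⬝ᵥ ((V * A * Vᵀ) *ᵥ y) := by
      rw [mulVec_mulVec, aux_dot, transpose_transpose, ← Matrix.mul_assoc]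
    rw [← key]
    have hz : Vᵀ *ᵥ y ≠ 0 := by
      intro h0
      apply hy
      funext a
      have hval : (Vᵀ *ᵥ y) (f a) = y a := by
        simp only [mulVec, dotProduct, transpose_apply, hV, Matrix.of_apply]
        rw [Finset.sum_eq_single a]
        · simp
        · intro b _ hb
          simp [hf.ne hb]
        · simp
      rw [h0] at hval
      simpa using hval.symm
    have := hA.dotProduct_mulVec_pos hz
    simpa using this

end Aux

/-- If `A` is SPD and the blocks of the multiplicative Schwarz method cover all
unknowns, then the error propagation matrix
`E = Π_j (I − V_jᵀ (V_j A V_jᵀ)⁻¹ V_j A)` satisfies `‖E‖_A < 1`: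
the method is convergent. -/
theorem schwarz_error_propagation_contraction (n NB : ℕ)
    (A : Matrix (Fin n) (Fin n) ℝ) (hA : A.PosDef)
    (nb : Fin NB → ℕ) (f : (j : Fin NB) → Fin (nb j) → Fin n)
    (hf : ∀ j, Function.Injective (f j))
    (V : (j : Fin NB) → Matrix (Fin (nb j)) (Fin n) ℝ)
    (hV : ∀ j, V j = Matrix.of fun a b => if f j a = b then (1 : ℝ) else 0)
    (hcover : ∀ i : Fin n, ∃ j a, f j a = i) :
    ∃ c : ℝ, 0 ≤ c ∧ c < 1 ∧ ∀ x : Fin n → ℝ,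
      (((List.finRange NB).map fun j => schwarzFactor A (V j)).prod.mulVec x) ⬝ᵥ
          A.mulVec ((((List.finRange NB).map fun j => schwarzFactor A (V j)).prod).mulVec x) ≤
        c * (x ⬝ᵥ A.mulVec x) := by
  have hAT : Aᵀ = A := by
    have := hA.isHermitian
    rwa [Matrix.IsHermitian, conjTranspose_eq_transpose_of_trivial] at this
  set E : Matrix (Fin n) (Fin n) ℝ :=
    ((List.finRange NB).map fun j => schwarzFactor A (V j)).prod with hE
  -- list induction
  have main : ∀ (l : List (Fin NB)) (x : Fin n → ℝ),
      ((l.map fun j => schwarzFactor A (V j)).prod *ᵥ x) ⬝ᵥ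
        (A *ᵥ ((l.map fun j => schwarzFactor A (V j)).prod *ᵥ x)) ≤ x ⬝ᵥ (A *ᵥ x)
      ∧ (((l.map fun j => schwarzFactor A (V j)).prod *ᵥ x) ⬝ᵥ
          (A *ᵥ ((l.map fun j => schwarzFactor A (V j)).prod *ᵥ x)) = x ⬝ᵥ (A *ᵥ x)
        → ((l.map fun j => schwarzFactor A (V j)).prod *ᵥ x = x
            ∧ ∀ j ∈ l, (V j * A) *ᵥ x = 0)) := by
    intro l
    induction l with
    | nil => intro x; simp
    | cons j t ih =>
      intro x
      obtain ⟨iht1, iht2⟩ := ih x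
      set z := (t.map fun j => schwarzFactor A (V j)).prod *ᵥ x with hz
      have hgram := aux_gram A hA (f j) (hf j) (V j) (hV j)
      obtain ⟨hs1, hs2⟩ := aux_step A hA hAT (V j) hgram z
      have hprod : ((j :: t).map fun j => schwarzFactor A (V j)).prod *ᵥ x
          = (schwarzFactor A (V j)) *ᵥ z := by
        simp [hz, mulVec_mulVec]
      constructor
      · rw [hprod]; exact le_trans hs1 iht1
      · intro heq
        rw [hprod] at heq
        have hze : z ⬝ᵥ (A *ᵥ z) = x ⬝ᵥ (A *ᵥ x) := le_antisymm iht1 (by rw [← heq]; exact hs1)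
        have heqz : (schwarzFactor A (V j)) *ᵥ z ⬝ᵥ (A *ᵥ ((schwarzFactor A (V j)) *ᵥ z))
            = z ⬝ᵥ (A *ᵥ z) := by rw [hze]; exact heq
        obtain ⟨hfix, hw0⟩ := hs2 heqz
        obtain ⟨hzx, hall⟩ := iht2 hze
        constructor
        · rw [hprod, hfix]; exact hzx
        · intro j' hj'
          rcases List.mem_cons.mp hj' with h | h
          · subst h; rw [← hzx]; exact hw0
          · exact hall j' h
  -- strict decrease for nonzero x
  have strict : ∀ x : Fin n → ℝ, x ≠ 0 →
      (E *ᵥ x) ⬝ᵥ (A *ᵥ (E *ᵥ x)) < x ⬝ᵥ (A *ᵥ x) := by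
    intro x hx
    obtain ⟨h1, h2⟩ := main (List.finRange NB) x
    rcases lt_or_eq_of_le h1 with h | h
    · exact h
    · exfalso
      obtain ⟨_, hall⟩ := h2 h
      have hAx : A *ᵥ x = 0 := by
        funext i
        obtain ⟨j, a, hja⟩ := hcover i
        have := congrFun (hall j (List.mem_finRange j)) a
        rw [← mulVec_mulVec] at this
        have hVa : ((V j) *ᵥ (A *ᵥ x)) a = (A *ᵥ x) (f j a) := by
          simp only [mulVec, dotProduct, hV j, Matrix.of_apply]
          rw [Finset.sum_eq_single (f j a)]
          · simp
          · intro b _ hb; simp [Ne.symm hb]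
          · simp
        rw [hVa, hja] at this
        simpa using this
      have := hA.dotProduct_mulVec_pos hx
      rw [hAx] at this
      simpa using this
  -- compactness argument
  by_cases hn : n = 0
  · refine ⟨1/2, by norm_num, by norm_num, fun x => ?_⟩
    subst hn
    simp [dotProduct]
  have hn' : 0 < n := Nat.pos_of_ne_zero hn
  haveI : Nonempty (Fin n) := ⟨⟨0, hn'⟩⟩
  set S : Set (Fin n → ℝ) := Metric.sphere (0 : Fin n → ℝ) 1 with hS
  have hScomp : IsCompact S := isCompact_sphere _ _
  have hSne : S.Nonempty := NormedSpace.sphere_nonempty.mpr zero_le_one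
  have hSnz : ∀ x ∈ S, x ≠ 0 := fun x hx => by
    intro h0
    rw [hS, Metric.mem_sphere, h0] at hx
    simp at hx
  set g : (Fin n → ℝ) → ℝ :=
    fun x => ((E *ᵥ x) ⬝ᵥ (A *ᵥ (E *ᵥ x))) / (x ⬝ᵥ (A *ᵥ x)) with hg
  have hgcont : ContinuousOn g S := by
    apply ContinuousOn.div
    · apply Continuous.continuousOn
      exact (continuous_const.matrix_mulVec continuous_id).dotProduct
        (continuous_const.matrix_mulVec (continuous_const.matrix_mulVec continuous_id))
    · apply Continuous.continuousOn
      exact continuous_id.dotProduct (continuous_const.matrix_mulVec continuous_id)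
    · intro x hx
      have := hA.dotProduct_mulVec_pos (hSnz x hx)
      simp only [star_trivial] at this
      exact ne_of_gt this
  obtain ⟨x₀, hx₀S, hx₀max'⟩ := hScomp.exists_isMaxOn hSne hgcont
  have hx₀max : ∀ x ∈ S, g x ≤ g x₀ := fun x hx => hx₀max' hx
  have hQpos : ∀ x : Fin n → ℝ, x ≠ 0 → 0 < x ⬝ᵥ (A *ᵥ x) := fun x hx => by
    have := hA.dotProduct_mulVec_pos hx
    simpa using this
  refine ⟨g x₀, ?_, ?_, ?_⟩
  · rw [hg]
    apply div_nonneg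
    · have := hA.posSemidef.dotProduct_mulVec_nonneg (E *ᵥ x₀)
      simpa using this
    · exact le_of_lt (hQpos x₀ (hSnz x₀ hx₀S))
  · rw [hg]
    rw [div_lt_one (hQpos x₀ (hSnz x₀ hx₀S))]
    exact strict x₀ (hSnz x₀ hx₀S)
  · intro x
    by_cases hx : x = 0
    · subst hx
      simp
    · have hnx : ‖x‖ ≠ 0 := norm_ne_zero_iff.mpr hx
      set u : Fin n → ℝ := ‖x‖⁻¹ • x with hu
      have huS : u ∈ S := by
        rw [hS, Metric.mem_sphere, dist_zero_right, hu, norm_smul]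
        simp [hnx]
      have hgu : g u ≤ g x₀ := hx₀max u huS
      have hscale : ∀ M : Matrix (Fin n) (Fin n) ℝ, ∀ v : Fin n → ℝ,
          (M *ᵥ (‖x‖⁻¹ • v)) ⬝ᵥ (A *ᵥ (M *ᵥ (‖x‖⁻¹ • v)))
            = ‖x‖⁻¹ * ‖x‖⁻¹ * ((M *ᵥ v) ⬝ᵥ (A *ᵥ (M *ᵥ v))) := by
        intro M v
        rw [mulVec_smul, mulVec_smul, smul_dotProduct, dotProduct_smul,
          smul_eq_mul, smul_eq_mul]
        ring
      have hQu : u ⬝ᵥ (A *ᵥ u) = ‖x‖⁻¹ * ‖x‖⁻¹ * (x ⬝ᵥ (A *ᵥ x)) := by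
        have h := hscale 1 x
        simp only [one_mulVec] at h
        rw [hu]
        exact h
      have hQEu : (E *ᵥ u) ⬝ᵥ (A *ᵥ (E *ᵥ u))
          = ‖x‖⁻¹ * ‖x‖⁻¹ * ((E *ᵥ x) ⬝ᵥ (A *ᵥ (E *ᵥ x))) := hscale E x
      have hQupos : 0 < u ⬝ᵥ (A *ᵥ u) := hQpos u (hSnz u huS)
      have h1 : (E *ᵥ u) ⬝ᵥ (A *ᵥ (E *ᵥ u)) ≤ g x₀ * (u ⬝ᵥ (A *ᵥ u)) := by
        rw [hg] at hgu
        calc (E *ᵥ u) ⬝ᵥ (A *ᵥ (E *ᵥ u))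
            = ((E *ᵥ u) ⬝ᵥ (A *ᵥ (E *ᵥ u))) / (u ⬝ᵥ (A *ᵥ u)) * (u ⬝ᵥ (A *ᵥ u)) := by
              field_simp
          _ ≤ g x₀ * (u ⬝ᵥ (A *ᵥ u)) := by
              apply mul_le_mul_of_nonneg_right hgu (le_of_lt hQupos)
      rw [hQEu, hQu] at h1
      have hpos2 : (0:ℝ) < ‖x‖⁻¹ * ‖x‖⁻¹ := by positivity
      calc (E *ᵥ x) ⬝ᵥ (A *ᵥ (E *ᵥ x))
          = (‖x‖⁻¹ * ‖x‖⁻¹)⁻¹ * (‖x‖⁻¹ * ‖x‖⁻¹ * ((E *ᵥ x) ⬝ᵥ (A *ᵥ (E *ᵥ x)))) := by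
            field_simp
        _ ≤ (‖x‖⁻¹ * ‖x‖⁻¹)⁻¹ * (g x₀ * (‖x‖⁻¹ * ‖x‖⁻¹ * (x ⬝ᵥ (A *ᵥ x)))) := by
            exact mul_le_mul_of_nonneg_left h1 (le_of_lt (inv_pos.mpr hpos2))
        _ = g x₀ * (x ⬝ᵥ (A *ᵥ x)) := by
            field_simp
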